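/- arXiv:2501.06512 — 2 statements merged into one kernel-verified Lean document; each statement's English description precedes it below -/
import Mathlib

section
/- Let p be an odd prime not dividing C_d·D_d, and let r ≥ −1 be an integer. If the Legendre symbol (Δ | p) equals 1, then B_{(p+1)d+r} ≡ C_d·B_{d+r} + D_d·B_r (mod p); in particular B_{(p+1)d−1} ≡ C_d·B_{d−1} (mod p). If the Legendre symbol (Δ | p) equals −1, then B_{(p+1)d+r} ≡ −D_d·B_r (mod p); in particular B_{(p+1)d−1} ≡ 0 (mod p). -/
/-!
Evaluating the Casoratian of `B` and its shift by the period `d` at `d` gives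
`B (2d) = C_d B d + D_d`; as both sides of `B (n + 2d) = C_d B (n + d) + D_d B n` solve the
recurrence, this identity holds for all `n ≥ -1`, so `u k = B (k d + r)` satisfies
`u (k + 2) = C_d u (k + 1) + D_d u k`, a recurrence with discriminant `Δ`. In the quadratic algebra
`𝔽_p[ω]`, `ω² = C_d ω + D_d`, every such sequence is `u k = φ (ω ^ k)` for a linear functional `φ`.
Since `(2ω - C_d)² = Δ`, Euler's criterion shows that the Frobenius fixes `ω` when `(Δ | p) = 1`
and maps it to its conjugate `C_d - ω` when `(Δ | p) = -1`; accordingly `ω ^ (p + 1)` is `ω²` or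
the norm `-D_d`.
-/

def IsRecurrenceSolution {R : Type*} [CommRing R] (a b X : ℤ → R) : Prop :=
  ∀ ν : ℤ, 1 ≤ ν → X ν = b ν * X (ν - 1) + a ν * X (ν - 2)

namespace IsRecurrenceSolution

variable {R : Type*} [CommRing R] {a b X Y : ℤ → R}

theorem mul_add_mul (hX : IsRecurrenceSolution a b X) (hY : IsRecurrenceSolution a b Y)
    (c e : R) : IsRecurrenceSolution a b (fun n => c * X n + e * Y n) := by
  intro ν hν
  simp only [hX ν hν, hY ν hν]
  ring

theorem shift {d : ℕ} (hX : IsRecurrenceSolution a b X)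
    (hpa : ∀ ν : ℤ, 1 ≤ ν → a (ν + d) = a ν) (hpb : ∀ ν : ℤ, 1 ≤ ν → b (ν + d) = b ν) :
    IsRecurrenceSolution a b (fun n => X (n + d)) := by
  intro ν hν
  show X (ν + d) = b ν * X (ν - 1 + d) + a ν * X (ν - 2 + d)
  rw [hX _ (by omega), hpa ν hν, hpb ν hν, sub_add_eq_add_sub, sub_add_eq_add_sub]

theorem eq_of_eq_neg_one_of_eq_zero (hX : IsRecurrenceSolution a b X)
    (hY : IsRecurrenceSolution a b Y) (hm1 : X (-1) = Y (-1)) (h₀ : X 0 = Y 0) :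
    ∀ n, -1 ≤ n → X n = Y n := by
  suffices h : ∀ n, 0 ≤ n → X (n - 1) = Y (n - 1) ∧ X n = Y n from
    fun n hn => by simpa using (h (n + 1) (by omega)).1
  intro n hn
  induction n, hn using Int.leInduction with
  | base => exact ⟨hm1, h₀⟩
  | succ n hn ih =>
    have hsub : n + 1 - 2 = n - 1 := by ring
    refine ⟨by simpa using ih.2, ?_⟩
    rw [hX _ (by omega), hY _ (by omega), add_sub_cancel_right, hsub, ih.1, ih.2]

theorem casoratian_eq (hX : IsRecurrenceSolution a b X) (hY : IsRecurrenceSolution a b Y)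
    (n : ℕ) :
    X n * Y (n - 1) - X (n - 1) * Y n =
      (∏ i ∈ Finset.range n, -a (i + 1)) * (X 0 * Y (-1) - X (-1) * Y 0) := by
  induction n with
  | zero => simp
  | succ n ih =>
    have hsub : (n : ℤ) + 1 - 2 = n - 1 := by ring
    push_cast
    rw [hX (n + 1) (by omega), hY (n + 1) (by omega), add_sub_cancel_right, hsub,
      Finset.prod_range_succ]
    linear_combination (-a (n + 1)) * ih

theorem pos [LinearOrder R] [IsStrictOrderedRing R] (hX : IsRecurrenceSolution a b X)
    (ha : ∀ ν : ℤ, 1 ≤ ν → 0 ≤ a ν) (hb : ∀ ν : ℤ, 1 ≤ ν → 0 < b ν)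
    (hm1 : 0 ≤ X (-1)) (h₀ : 0 < X 0) : ∀ n, 0 ≤ n → 0 < X n := by
  suffices h : ∀ n, 0 ≤ n → 0 ≤ X (n - 1) ∧ 0 < X n from fun n hn => (h n hn).2
  intro n hn
  induction n, hn using Int.leInduction with
  | base => exact ⟨hm1, h₀⟩
  | succ n hn ih =>
    have hsub : n + 1 - 2 = n - 1 := by ring
    refine ⟨by simpa using ih.2.le, ?_⟩
    rw [hX _ (by omega), add_sub_cancel_right, hsub]
    exact add_pos_of_pos_of_nonneg (mul_pos (hb _ (by omega)) ih.2)
      (mul_nonneg (ha _ (by omega)) ih.1)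

theorem add_two_mul_eq [IsDomain R] {d : ℕ} (hX : IsRecurrenceSolution a b X)
    (hpa : ∀ ν : ℤ, 1 ≤ ν → a (ν + d) = a ν) (hpb : ∀ ν : ℤ, 1 ≤ ν → b (ν + d) = b ν)
    (hm1 : X (-1) = 0) (h₀ : X 0 = 1) (hXd : X (d - 1) ≠ 0) {C D : R}
    (hC : X (d - 1) * C = X (2 * d - 1)) (hD : ∏ i ∈ Finset.range d, -a (i + 1) = -D) :
    ∀ n, -1 ≤ n → X (n + 2 * d) = C * X (n + d) + D * X n := by
  have hS := hX.shift hpa hpb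
  have h2d : X (2 * d) = C * X d + D := by
    have hcas := hX.casoratian_eq hS d
    simp only [hm1, h₀, hD, zero_mul, sub_zero, one_mul, zero_add, ← two_mul,
      show (-1 : ℤ) + d = d - 1 by ring, show (d : ℤ) - 1 + d = 2 * d - 1 by ring, ← hC] at hcas
    exact (mul_left_cancel₀ hXd (by linear_combination hcas)).symm
  have hS2 : IsRecurrenceSolution a b (fun n => X (n + 2 * d)) := by
    simpa only [two_mul, ← add_assoc] using hS.shift hpa hpb
  refine hS2.eq_of_eq_neg_one_of_eq_zero (hS.mul_add_mul hX C D) ?_ ?_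
  · simp only [hm1, mul_zero, add_zero]
    rw [show (-1 : ℤ) + 2 * d = 2 * d - 1 by ring, show (-1 : ℤ) + d = d - 1 by ring, ← hC,
      mul_comm]
  · simp only [zero_add, h₀, mul_one, h2d]

end IsRecurrenceSolution

open QuadraticAlgebra

namespace QuadraticAlgebra

variable {R : Type*} [CommRing R] {a b : R}

instance (p : ℕ) [CharP R p] : CharP (QuadraticAlgebra R a b) p :=
  charP_of_injective_algebraMap algebraMap_injective p

theorem two_mul_omega_sub_sq :
    (2 * ω - algebraMap R (QuadraticAlgebra R a b) b) ^ 2 = algebraMap R _ (b ^ 2 + 4 * a) := by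
  have h := omega_mul_omega_eq_algebraMap (a := a) (b := b)
  simp only [map_add, map_mul, map_pow, map_ofNat]
  linear_combination 4 * h

theorem isUnit_two (h : IsUnit (2 : R)) : IsUnit (2 : QuadraticAlgebra R a b) := by
  simpa only [map_ofNat] using h.map (algebraMap R (QuadraticAlgebra R a b))

theorem exists_linearMap_omega_pow {u : ℕ → R} (hu : ∀ k, u (k + 2) = b * u (k + 1) + a * u k) :
    ∃ φ : QuadraticAlgebra R a b →ₗ[R] R, ∀ k, φ (ω ^ k) = u k := by
  refine ⟨u 0 • reₗ a b + u 1 • imₗ a b, fun k => ?_⟩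
  induction k using Nat.twoStepInduction with
  | zero => simp
  | one => simp
  | more k ih₀ ih₁ =>
    have h : (ω : QuadraticAlgebra R a b) ^ (k + 2) = a • ω ^ k + b • ω ^ (k + 1) := by
      rw [pow_add, sq, omega_mul_omega_eq_add, pow_succ]
      simp only [mul_add, mul_smul_comm, mul_one]
    rw [h, map_add, map_smul, map_smul, ih₀, ih₁, hu, smul_eq_mul, smul_eq_mul]
    ring

end QuadraticAlgebra

section Lucas

variable {p : ℕ} [Fact p.Prime]

theorem pow_card_eq_legendreSym_mul {A : Type*} [CommRing A] [Algebra (ZMod p) A] (hp : p ≠ 2)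
    {Δ : ℤ} {s : A} (hs : s ^ 2 = algebraMap (ZMod p) A Δ) : s ^ p = legendreSym p Δ * s := by
  obtain ⟨t, ht⟩ := (Fact.out : p.Prime).odd_of_ne_two hp
  calc s ^ p = (s ^ 2) ^ (p / 2) * s := by rw [← pow_mul, ← pow_succ]; congr 1; omega
    _ = legendreSym p Δ * s := by rw [hs, ← map_pow, ← legendreSym.eq_pow, map_intCast]

theorem two_mul_omega_pow_card (hp : p ≠ 2) (C D : ℤ) :
    2 * ω ^ p - (C : QuadraticAlgebra (ZMod p) D C) =
      ((legendreSym p (C ^ 2 + 4 * D) : ℤ) : QuadraticAlgebra (ZMod p) D C) *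
        (2 * ω - (C : QuadraticAlgebra (ZMod p) D C)) := by
  have h := pow_card_eq_legendreSym_mul hp (Δ := C ^ 2 + 4 * D)
    (s := 2 * (ω : QuadraticAlgebra (ZMod p) D C) - algebraMap (ZMod p) _ C)
    (by rw [two_mul_omega_sub_sq]; push_cast; rfl)
  have hfrob (c : ZMod p) : algebraMap (ZMod p) (QuadraticAlgebra (ZMod p) D C) c ^ p =
      algebraMap _ _ c := by
    rw [← map_pow, ZMod.pow_card]
  rwa [sub_pow_char, mul_pow, ← map_ofNat (algebraMap (ZMod p) _) 2, hfrob, hfrob, map_ofNat,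
    map_intCast] at h

theorem ZMod.isUnit_two (hp : p ≠ 2) : IsUnit (2 : ZMod p) :=
  (Ring.two_ne_zero (by rwa [ZMod.ringChar_zmod_n])).isUnit

theorem omega_pow_card_of_legendreSym_eq_one (hp : p ≠ 2) {C D : ℤ}
    (hχ : legendreSym p (C ^ 2 + 4 * D) = 1) :
    (ω : QuadraticAlgebra (ZMod p) D C) ^ p = ω := by
  have h := two_mul_omega_pow_card hp C D
  rw [hχ, Int.cast_one, one_mul, sub_left_inj] at h
  exact (isUnit_two (ZMod.isUnit_two hp)).mul_left_cancel h

theorem omega_pow_card_of_legendreSym_eq_neg_one (hp : p ≠ 2) {C D : ℤ}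
    (hχ : legendreSym p (C ^ 2 + 4 * D) = -1) :
    (ω : QuadraticAlgebra (ZMod p) D C) ^ p = (C : QuadraticAlgebra (ZMod p) D C) - ω := by
  have h := two_mul_omega_pow_card hp C D
  rw [hχ, Int.cast_neg, Int.cast_one] at h
  exact (isUnit_two (ZMod.isUnit_two hp)).mul_left_cancel (by linear_combination h)

theorem lucas_modEq_of_legendreSym_eq_one (hp : p ≠ 2) {C D : ℤ} {u : ℕ → ℤ}
    (hu : ∀ k, u (k + 2) = C * u (k + 1) + D * u k) (hχ : legendreSym p (C ^ 2 + 4 * D) = 1) :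
    u (p + 1) ≡ C * u 1 + D * u 0 [ZMOD p] := by
  obtain ⟨φ, hφ⟩ := exists_linearMap_omega_pow (a := (D : ZMod p)) (b := (C : ZMod p))
    (u := fun k => (u k : ZMod p)) (fun k => by simp [hu])
  rw [← ZMod.intCast_eq_intCast_iff]
  calc (u (p + 1) : ZMod p) = φ (ω ^ p * ω) := by rw [← pow_succ, hφ]
    _ = φ (ω ^ 2) := by rw [omega_pow_card_of_legendreSym_eq_one hp hχ, sq]
    _ = _ := by rw [hφ, hu]

theorem lucas_modEq_of_legendreSym_eq_neg_one (hp : p ≠ 2) {C D : ℤ} {u : ℕ → ℤ}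
    (hu : ∀ k, u (k + 2) = C * u (k + 1) + D * u k) (hχ : legendreSym p (C ^ 2 + 4 * D) = -1) :
    u (p + 1) ≡ -D * u 0 [ZMOD p] := by
  obtain ⟨φ, hφ⟩ := exists_linearMap_omega_pow (a := (D : ZMod p)) (b := (C : ZMod p))
    (u := fun k => (u k : ZMod p)) (fun k => by simp [hu])
  have hnorm : ((C : QuadraticAlgebra (ZMod p) D C) - ω) * ω = algebraMap (ZMod p) _ (-D) := by
    rw [sub_mul, omega_mul_omega_eq_algebraMap]
    simp
  rw [← ZMod.intCast_eq_intCast_iff]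
  calc (u (p + 1) : ZMod p) = φ (ω ^ p * ω) := by rw [← pow_succ, hφ]
    _ = φ (algebraMap (ZMod p) _ (-D)) := by
      rw [omega_pow_card_of_legendreSym_eq_neg_one hp hχ, hnorm]
    _ = _ := by rw [Algebra.algebraMap_eq_smul_one, map_smul, ← pow_zero ω, hφ]; push_cast; rfl

end Lucas

theorem divisibility_p_plus_one_general
    (d : ℕ) (hd : 1 ≤ d) (a b : ℤ → ℤ)
    (ha : ∀ ν : ℤ, 1 ≤ ν → 0 < a ν) (hb : ∀ ν : ℤ, 1 ≤ ν → 0 < b ν)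
    (hpa : ∀ ν : ℤ, 1 ≤ ν → a (ν + d) = a ν) (hpb : ∀ ν : ℤ, 1 ≤ ν → b (ν + d) = b ν)
    (B : ℤ → ℤ) (hBm1 : B (-1) = 0) (hB0 : B 0 = 1)
    (hBrec : ∀ ν : ℤ, 1 ≤ ν → B ν = b ν * B (ν - 1) + a ν * B (ν - 2))
    (Cd Dd Δ : ℤ)
    (hC : B ((d : ℤ) - 1) * Cd = B (2 * (d : ℤ) - 1))
    (hD : Dd = (-1 : ℤ) ^ (d - 1) * ∏ i ∈ Finset.range d, a ((i : ℤ) + 1))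
    (hΔ : Δ = Cd ^ 2 + 4 * Dd)
    (p : ℕ) [Fact p.Prime] (hodd : p ≠ 2) :
    ∀ r : ℤ, -1 ≤ r →
      (legendreSym p Δ = 1 →
        B (((p : ℤ) + 1) * d + r) ≡ Cd * B ((d : ℤ) + r) + Dd * B r [ZMOD p] ∧
        B (((p : ℤ) + 1) * d - 1) ≡ Cd * B ((d : ℤ) - 1) [ZMOD p]) ∧
      (legendreSym p Δ = -1 →
        B (((p : ℤ) + 1) * d + r) ≡ -Dd * B r [ZMOD p] ∧
        B (((p : ℤ) + 1) * d - 1) ≡ 0 [ZMOD p]) := by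
  have hB : IsRecurrenceSolution a b B := hBrec
  have hBd : 0 < B (d - 1) :=
    hB.pos (fun ν hν => (ha ν hν).le) hb hBm1.ge (hB0 ▸ one_pos) _ (by omega)
  have hprod : ∏ i ∈ Finset.range d, -a (i + 1) = -Dd := by
    have hsign : (-1 : ℤ) ^ d = -(-1) ^ (d - 1) := by
      rw [← Nat.sub_add_cancel hd, pow_succ', Nat.add_sub_cancel, neg_one_mul]
    rw [Finset.prod_neg, Finset.card_range, hD, hsign, neg_mul]
  have hkey := hB.add_two_mul_eq hpa hpb hBm1 hB0 hBd.ne' hC hprod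
  have hlucas : ∀ r : ℤ, -1 ≤ r →
      (legendreSym p Δ = 1 → B (((p : ℤ) + 1) * d + r) ≡ Cd * B (d + r) + Dd * B r [ZMOD p]) ∧
      (legendreSym p Δ = -1 → B (((p : ℤ) + 1) * d + r) ≡ -Dd * B r [ZMOD p]) := by
    intro r hr
    have hu (k : ℕ) : B (((k + 2 : ℕ) : ℤ) * d + r) =
        Cd * B (((k + 1 : ℕ) : ℤ) * d + r) + Dd * B ((k : ℤ) * d + r) := by
      convert hkey (k * d + r) (le_add_of_nonneg_of_le (by positivity) hr) using 2 <;>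
        push_cast <;> ring_nf
    subst hΔ
    refine ⟨fun hχ => ?_, fun hχ => ?_⟩
    · simpa using lucas_modEq_of_legendreSym_eq_one (u := fun k : ℕ => B (k * d + r)) hodd hu hχ
    · simpa using
        lucas_modEq_of_legendreSym_eq_neg_one (u := fun k : ℕ => B (k * d + r)) hodd hu hχ
  intro r hr
  refine ⟨fun hχ => ⟨(hlucas r hr).1 hχ, ?_⟩, fun hχ => ⟨(hlucas r hr).2 hχ, ?_⟩⟩
  · simpa [hBm1, sub_eq_add_neg] using (hlucas (-1) le_rfl).1 hχ
  · simpa [hBm1, sub_eq_add_neg] using (hlucas (-1) le_rfl).2 hχ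

/-- Congruences for `B_{(p+1)d+r}` modulo an odd prime `p ∤ C_d·D_d`, according to whether
`Δ` is a quadratic residue or non-residue modulo `p`. -/
theorem divisibility_p_plus_one
    (d : ℕ) (hd : 1 ≤ d) (a b : ℤ → ℤ)
    (ha : ∀ ν : ℤ, 1 ≤ ν → 0 < a ν) (hb : ∀ ν : ℤ, 1 ≤ ν → 0 < b ν)
    (hpa : ∀ ν : ℤ, 1 ≤ ν → a (ν + d) = a ν) (hpb : ∀ ν : ℤ, 1 ≤ ν → b (ν + d) = b ν)
    (B : ℤ → ℤ) (hBm1 : B (-1) = 0) (hB0 : B 0 = 1)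
    (hBrec : ∀ ν : ℤ, 1 ≤ ν → B ν = b ν * B (ν - 1) + a ν * B (ν - 2))
    (Cd Dd Δ : ℤ)
    (hC : B ((d : ℤ) - 1) * Cd = B (2 * (d : ℤ) - 1))
    (hD : Dd = (-1 : ℤ) ^ (d - 1) * ∏ i ∈ Finset.range d, a ((i : ℤ) + 1))
    (hΔ : Δ = Cd ^ 2 + 4 * Dd)
    (p : ℕ) [Fact p.Prime] (hodd : p ≠ 2) (hpCD : ¬ (p : ℤ) ∣ Cd * Dd) :
    ∀ r : ℤ, -1 ≤ r →
      (legendreSym p Δ = 1 →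
        B (((p : ℤ) + 1) * d + r) ≡ Cd * B ((d : ℤ) + r) + Dd * B r [ZMOD p] ∧
        B (((p : ℤ) + 1) * d - 1) ≡ Cd * B ((d : ℤ) - 1) [ZMOD p]) ∧
      (legendreSym p Δ = -1 →
        B (((p : ℤ) + 1) * d + r) ≡ -Dd * B r [ZMOD p] ∧
        B (((p : ℤ) + 1) * d - 1) ≡ 0 [ZMOD p]) :=
  divisibility_p_plus_one_general d hd a b ha hb hpa hpb B hBm1 hB0 hBrec Cd Dd Δ hC hD hΔ p hodd
end

section
/- Let p be an odd prime not dividing C_d·D_d, and let r ≥ −1 be an integer. If the Legendre symbol (Δ | p) equals 1, then B_{(p−1)d+r} ≡ B_r (mod p); in particular B_{(p−1)d−1} ≡ 0 (mod p). If the Legendre symbol (Δ | p) equals −1, then B_{pd+r} ≡ C_d·B_r − B_{d+r} (mod p); in particular B_{pd−1} ≡ −B_{d−1} (mod p). -/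
/-!
Since `a` and `b` are `d`-periodic, `ν ↦ B (ν + d)` solves the same second-order recurrence as
`B`. Three solutions of a second-order recurrence are linearly dependent, so
`B (ν + 2d) = C_d B (ν + d) + D_d B ν`; the coefficient of `B (ν + d)` is read off at `ν = -1`,
and that of `B ν` is the Casoratian of `B` and `B (· + d)`, a product of the `-a_i`.

Hence `k ↦ B (k d + r)` is a Lucas sequence with characteristic polynomial `X² - C_d X - D_d`
modulo `p`. Adjoin its roots `α, β` to `ZMod p`. Binet's formula expresses `(α - β) u n` through
`α ^ n` and `β ^ n`, and Euler's criterion applied to `(α - β) ^ 2 = Δ` gives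
`(α - β) ^ p = (Δ | p) (α - β)`. Together with `α ^ p + β ^ p = α + β` this shows that
Frobenius fixes `α` and `β` when `(Δ | p) = 1` and swaps them when `(Δ | p) = -1`.
-/

open Finset

universe u

section Recurrence

variable {R : Type*} [CommRing R]

def IsRecSolution (a b X : ℤ → R) : Prop :=
  ∀ ν : ℤ, 1 ≤ ν → X ν = b ν * X (ν - 1) + a ν * X (ν - 2)

namespace IsRecSolution

variable {a b X Y : ℤ → R}

theorem mul_add_mul (hX : IsRecSolution a b X) (hY : IsRecSolution a b Y) (s t : R) :
    IsRecSolution a b (fun ν => s * X ν + t * Y ν) := fun ν hν => by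
  dsimp only
  rw [hX ν hν, hY ν hν]
  ring

theorem shift {d : ℕ} (hpa : ∀ ν : ℤ, 1 ≤ ν → a (ν + d) = a ν)
    (hpb : ∀ ν : ℤ, 1 ≤ ν → b (ν + d) = b ν) (hX : IsRecSolution a b X) :
    IsRecSolution a b (fun ν => X (ν + d)) := fun ν hν => by
  dsimp only
  rw [hX (ν + d) (by omega), hpa ν hν, hpb ν hν, add_sub_right_comm, add_sub_right_comm]

theorem eq_of_eq_of_eq (hX : IsRecSolution a b X) (hY : IsRecSolution a b Y)
    (hm1 : X (-1) = Y (-1)) (h0 : X 0 = Y 0) (ν : ℤ) (hν : -1 ≤ ν) : X ν = Y ν := by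
  suffices X ν = Y ν ∧ X (ν + 1) = Y (ν + 1) from this.1
  induction ν, hν using Int.leInduction with
  | base => exact ⟨hm1, by simpa using h0⟩
  | succ ν hν ih =>
    refine ⟨ih.2, ?_⟩
    rw [hX _ (by omega), hY _ (by omega), add_sub_cancel_right, show ν + 1 + 1 - 2 = ν by ring,
      ih.1, ih.2]

theorem casoratian (hX : IsRecSolution a b X) (hY : IsRecSolution a b Y) (n : ℕ) :
    X (n - 1) * Y n - X n * Y (n - 1) =
      (∏ i ∈ range n, -a (i + 1)) * (X (-1) * Y 0 - X 0 * Y (-1)) := by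
  induction n with
  | zero => simp
  | succ n ih =>
    rw [prod_range_succ, Nat.cast_succ, add_sub_cancel_right, hX (n + 1) (by omega),
      hY (n + 1) (by omega), add_sub_cancel_right, show (n : ℤ) + 1 - 2 = n - 1 by ring]
    linear_combination (-a (n + 1)) * ih

theorem add_two_mul_eq [IsDomain R] {B : ℤ → R} {d : ℕ}
    (hpa : ∀ ν : ℤ, 1 ≤ ν → a (ν + d) = a ν) (hpb : ∀ ν : ℤ, 1 ≤ ν → b (ν + d) = b ν)
    (hB : IsRecSolution a b B) (hBm1 : B (-1) = 0) (hB0 : B 0 = 1) (hBd : B (d - 1) ≠ 0)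
    {C : R} (hC : B (d - 1) * C = B (2 * d - 1)) (ν : ℤ) (hν : -1 ≤ ν) :
    B (ν + 2 * d) = C * B (ν + d) + (-∏ i ∈ range d, -a (i + 1)) * B ν := by
  have hY := hB.shift hpa hpb
  have hW := hB.casoratian hY d
  simp only [hBm1, hB0, zero_add, ← two_mul, show -1 + (d : ℤ) = d - 1 by ring,
    sub_add_eq_add_sub] at hW
  have h := (hY.shift hpa hpb).eq_of_eq_of_eq
    (hY.mul_add_mul hB C (-∏ i ∈ range d, -a (i + 1)))
    (by rw [hBm1, show (-1 : ℤ) + d + d = 2 * d - 1 by ring,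
      show (-1 : ℤ) + d = d - 1 by ring, ← hC]; ring)
    (mul_left_cancel₀ hBd (by
      simp only [zero_add, ← two_mul, hB0]; linear_combination hW - hC * B d)) ν hν
  simpa only [add_assoc, ← two_mul] using h

theorem pos {a b X : ℤ → ℤ} (hX : IsRecSolution a b X) (ha : ∀ ν : ℤ, 1 ≤ ν → 0 ≤ a ν)
    (hb : ∀ ν : ℤ, 1 ≤ ν → 0 < b ν) (hm1 : 0 ≤ X (-1)) (h0 : 0 < X 0) (ν : ℤ) (hν : 0 ≤ ν) :
    0 < X ν := by
  suffices 0 ≤ X (ν - 1) ∧ 0 < X ν from this.2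
  induction ν, hν using Int.leInduction with
  | base => exact ⟨hm1, h0⟩
  | succ ν hν ih =>
    refine ⟨by simpa using ih.2.le, ?_⟩
    rw [hX _ (by omega), add_sub_cancel_right, show ν + 1 - 2 = ν - 1 by ring]
    have := ha (ν + 1) (by omega)
    have := hb (ν + 1) (by omega)
    nlinarith [ih.1, ih.2]

end IsRecSolution

end Recurrence

section Binet

variable {R : Type*} [CommRing R] {α β : R} {u : ℕ → R}

theorem sub_mul_eq_pow_mul_of_rec
    (hu : ∀ n, u (n + 2) = (α + β) * u (n + 1) - α * β * u n) (n : ℕ) :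
    u (n + 1) - β * u n = α ^ n * (u 1 - β * u 0) := by
  induction n with
  | zero => simp
  | succ n ih => rw [hu, pow_succ]; linear_combination α * ih

theorem sub_mul_eq_binet
    (hu : ∀ n, u (n + 2) = (α + β) * u (n + 1) - α * β * u n) (n : ℕ) :
    (α - β) * u n = α ^ n * (u 1 - β * u 0) - β ^ n * (u 1 - α * u 0) := by
  have hu' : ∀ n, u (n + 2) = (β + α) * u (n + 1) - β * α * u n := fun n => by
    rw [hu]; ring
  linear_combination sub_mul_eq_pow_mul_of_rec hu n - sub_mul_eq_pow_mul_of_rec hu' n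

end Binet

open Polynomial in
theorem exists_algebra_add_eq_mul_eq {K : Type u} [Field K] (c d : K) :
    ∃ (R : Type u) (_ : CommRing R) (_ : Algebra K R) (_ : Nontrivial R) (α β : R),
      α + β = algebraMap K R c ∧ α * β = -algebraMap K R d := by
  let f : K[X] := X ^ 2 - C c * X - C d
  have hf : f.degree = 2 := by unfold f; compute_degree!
  have hroot := AdjoinRoot.eval₂_root f
  simp only [f, eval₂_sub, eval₂_mul, eval₂_pow, eval₂_X, eval₂_C,
    ← AdjoinRoot.algebraMap_eq] at hroot
  refine ⟨AdjoinRoot f, inferInstance, inferInstance,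
    AdjoinRoot.nontrivial f (by rw [hf]; decide), AdjoinRoot.root f,
    algebraMap K _ c - AdjoinRoot.root f, by ring, ?_⟩
  linear_combination (-1 : AdjoinRoot f) * hroot

section Frobenius

variable {p : ℕ} [Fact p.Prime] {R : Type*} [CommRing R] [Algebra (ZMod p) R]

theorem pow_prime_eq_legendreSym_mul (hp : p ≠ 2) {Δ : ℤ} {s : R}
    (hs : s ^ 2 = algebraMap (ZMod p) R Δ) : s ^ p = legendreSym p Δ * s := by
  obtain ⟨k, hk⟩ := (Fact.out : p.Prime).odd_of_ne_two hp
  have hk' : p / 2 = k := by omega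
  rw [← map_intCast (algebraMap (ZMod p) R), legendreSym.eq_pow, hk', map_pow, ← hs, hk,
    pow_succ, pow_mul, mul_comm]

theorem isUnit_two_of_prime_ne_two (hp : p ≠ 2) : IsUnit (2 : R) := by
  have h2 : (2 : ZMod p) ≠ 0 := Ring.two_ne_zero (by rwa [ZMod.ringChar_zmod_n])
  have h := h2.isUnit.map (algebraMap (ZMod p) R)
  rwa [map_ofNat] at h

variable {α β : R} {c d : ℤ}

theorem sub_sq_eq_algebraMap (hsum : α + β = algebraMap (ZMod p) R c)
    (hprod : α * β = -algebraMap (ZMod p) R d) :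
    (α - β) ^ 2 = algebraMap (ZMod p) R ((c ^ 2 + 4 * d : ℤ) : ZMod p) := by
  simp only [Int.cast_add, Int.cast_mul, Int.cast_pow, Int.cast_ofNat, map_add, map_mul,
    map_pow, map_ofNat]
  linear_combination (α + β + algebraMap (ZMod p) R c) * hsum - 4 * hprod

theorem isUnit_sub_of_legendreSym_ne_zero (hsum : α + β = algebraMap (ZMod p) R c)
    (hprod : α * β = -algebraMap (ZMod p) R d) (h : legendreSym p (c ^ 2 + 4 * d) ≠ 0) :
    IsUnit (α - β) := by
  rw [Ne, legendreSym.eq_zero_iff] at h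
  rw [← isUnit_pow_iff two_ne_zero, sub_sq_eq_algebraMap hsum hprod]
  exact (Ne.isUnit h).map _

theorem pow_prime_add_and_sub [Nontrivial R] (hp : p ≠ 2)
    (hsum : α + β = algebraMap (ZMod p) R c) (hprod : α * β = -algebraMap (ZMod p) R d) :
    α ^ p + β ^ p = α + β ∧ α ^ p - β ^ p = legendreSym p (c ^ 2 + 4 * d) * (α - β) := by
  have : CharP R p := charP_of_injective_algebraMap' (ZMod p) p
  constructor
  · rw [← add_pow_char, hsum, ← map_pow, ZMod.pow_card]
  · rw [← sub_pow_char, pow_prime_eq_legendreSym_mul hp (sub_sq_eq_algebraMap hsum hprod)]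

theorem pow_prime_eq_self_of_legendreSym_eq_one [Nontrivial R] (hp : p ≠ 2)
    (hsum : α + β = algebraMap (ZMod p) R c) (hprod : α * β = -algebraMap (ZMod p) R d)
    (h : legendreSym p (c ^ 2 + 4 * d) = 1) : α ^ p = α ∧ β ^ p = β := by
  obtain ⟨hadd, hsub⟩ := pow_prime_add_and_sub hp hsum hprod
  rw [h, Int.cast_one, one_mul] at hsub
  have h2 := isUnit_two_of_prime_ne_two (R := R) hp
  exact ⟨h2.mul_left_cancel (by linear_combination hadd + hsub),
    h2.mul_left_cancel (by linear_combination hadd - hsub)⟩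

theorem pow_prime_eq_swap_of_legendreSym_eq_neg_one [Nontrivial R] (hp : p ≠ 2)
    (hsum : α + β = algebraMap (ZMod p) R c) (hprod : α * β = -algebraMap (ZMod p) R d)
    (h : legendreSym p (c ^ 2 + 4 * d) = -1) : α ^ p = β ∧ β ^ p = α := by
  obtain ⟨hadd, hsub⟩ := pow_prime_add_and_sub hp hsum hprod
  rw [h, Int.cast_neg, Int.cast_one, neg_one_mul] at hsub
  have h2 := isUnit_two_of_prime_ne_two (R := R) hp
  exact ⟨h2.mul_left_cancel (by linear_combination hadd + hsub),
    h2.mul_left_cancel (by linear_combination hadd - hsub)⟩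

end Frobenius

section Lucas

variable {p : ℕ} [Fact p.Prime] {c d : ℤ} {u : ℕ → ZMod p}

theorem lucas_sub_one_eq_of_legendreSym_eq_one (hp : p ≠ 2) (hd : (d : ZMod p) ≠ 0)
    (hu : ∀ n, u (n + 2) = c * u (n + 1) + d * u n) (h : legendreSym p (c ^ 2 + 4 * d) = 1) :
    u (p - 1) = u 0 := by
  obtain ⟨R, _, _, _, α, β, hsum, hprod⟩ := exists_algebra_add_eq_mul_eq (c : ZMod p) d
  let v n := algebraMap (ZMod p) R (u n)
  have hv : ∀ n, v (n + 2) = (α + β) * v (n + 1) - α * β * v n := fun n => by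
    simp only [v, hu, hsum, hprod, map_add, map_mul]; ring
  obtain ⟨hαp, hβp⟩ := pow_prime_eq_self_of_legendreSym_eq_one hp hsum hprod h
  have hαβ : IsUnit (α * β) := hprod ▸ (hd.isUnit.map _).neg
  have hp0 : p ≠ 0 := (Fact.out : p.Prime).ne_zero
  have hα : α ^ (p - 1) = 1 :=
    (isUnit_of_mul_isUnit_left hαβ).mul_left_cancel (by rw [mul_pow_sub_one hp0, hαp, mul_one])
  have hβ : β ^ (p - 1) = 1 :=
    (isUnit_of_mul_isUnit_right hαβ).mul_left_cancel (by rw [mul_pow_sub_one hp0, hβp, mul_one])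
  have hdiff := isUnit_sub_of_legendreSym_ne_zero hsum hprod (h ▸ one_ne_zero)
  refine (algebraMap (ZMod p) R).injective (hdiff.mul_left_cancel ?_)
  rw [sub_mul_eq_binet hv, hα, hβ]
  ring

theorem lucas_eq_of_legendreSym_eq_neg_one (hp : p ≠ 2)
    (hu : ∀ n, u (n + 2) = c * u (n + 1) + d * u n) (h : legendreSym p (c ^ 2 + 4 * d) = -1) :
    u p = c * u 0 - u 1 := by
  obtain ⟨R, _, _, _, α, β, hsum, hprod⟩ := exists_algebra_add_eq_mul_eq (c : ZMod p) d
  let v n := algebraMap (ZMod p) R (u n)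
  have hv : ∀ n, v (n + 2) = (α + β) * v (n + 1) - α * β * v n := fun n => by
    simp only [v, hu, hsum, hprod, map_add, map_mul]; ring
  obtain ⟨hαp, hβp⟩ := pow_prime_eq_swap_of_legendreSym_eq_neg_one hp hsum hprod h
  have hdiff :=
    isUnit_sub_of_legendreSym_ne_zero hsum hprod (h ▸ neg_ne_zero.mpr one_ne_zero)
  refine (algebraMap (ZMod p) R).injective (hdiff.mul_left_cancel ?_)
  rw [sub_mul_eq_binet hv, hαp, hβp, map_sub, map_mul, ← hsum]
  ring

end Lucas

theorem modEq_of_add_two_mul_eq {p : ℕ} [Fact p.Prime] (hp : p ≠ 2) {X : ℤ → ℤ} {C D : ℤ}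
    {d : ℕ} (hX : ∀ ν : ℤ, -1 ≤ ν → X (ν + 2 * d) = C * X (ν + d) + D * X ν) {r : ℤ}
    (hr : -1 ≤ r) :
    (¬ (p : ℤ) ∣ D → legendreSym p (C ^ 2 + 4 * D) = 1 →
      X ((p - 1) * d + r) ≡ X r [ZMOD p]) ∧
    (legendreSym p (C ^ 2 + 4 * D) = -1 → X (p * d + r) ≡ C * X r - X (d + r) [ZMOD p]) := by
  let u (k : ℕ) : ZMod p := X (k * d + r)
  have hu : ∀ k, u (k + 2) = C * u (k + 1) + D * u k := fun k => by
    have hk : -1 ≤ (k : ℤ) * d + r := by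
      nlinarith [Int.natCast_nonneg k, Int.natCast_nonneg d]
    simp only [u, Nat.cast_add, add_mul, Nat.cast_ofNat, Nat.cast_one, one_mul]
    rw [add_right_comm, hX _ hk, add_right_comm]
    push_cast
    ring
  refine ⟨fun hD h => ?_, fun h => ?_⟩
  · have hDp : (D : ZMod p) ≠ 0 := by rwa [Ne, ZMod.intCast_zmod_eq_zero_iff_dvd]
    have := lucas_sub_one_eq_of_legendreSym_eq_one hp hDp hu h
    simp only [u, Nat.cast_pred (Fact.out : p.Prime).pos, CharP.cast_eq_zero, zero_mul,
      zero_add] at this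
    exact (ZMod.intCast_eq_intCast_iff _ _ _).mp this
  · have := lucas_eq_of_legendreSym_eq_neg_one hp hu h
    simp only [u, CharP.cast_eq_zero, Nat.cast_one, zero_mul, zero_add, one_mul] at this
    exact (ZMod.intCast_eq_intCast_iff _ _ _).mp (by push_cast; exact this)

/-- Congruences for `B_{(p−1)d+r}` and `B_{pd+r}` modulo an odd prime `p ∤ C_d·D_d`,
according to whether `Δ` is a quadratic residue or non-residue modulo `p`. -/
theorem divisibility_p
    (d : ℕ) (hd : 1 ≤ d) (a b : ℤ → ℤ)
    (ha : ∀ ν : ℤ, 1 ≤ ν → 0 < a ν) (hb : ∀ ν : ℤ, 1 ≤ ν → 0 < b ν)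
    (hpa : ∀ ν : ℤ, 1 ≤ ν → a (ν + d) = a ν) (hpb : ∀ ν : ℤ, 1 ≤ ν → b (ν + d) = b ν)
    (B : ℤ → ℤ) (hBm1 : B (-1) = 0) (hB0 : B 0 = 1)
    (hBrec : ∀ ν : ℤ, 1 ≤ ν → B ν = b ν * B (ν - 1) + a ν * B (ν - 2))
    (Cd Dd Δ : ℤ)
    (hC : B ((d : ℤ) - 1) * Cd = B (2 * (d : ℤ) - 1))
    (hD : Dd = (-1 : ℤ) ^ (d - 1) * ∏ i ∈ Finset.range d, a ((i : ℤ) + 1))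
    (hΔ : Δ = Cd ^ 2 + 4 * Dd)
    (p : ℕ) [Fact p.Prime] (hodd : p ≠ 2) (hpCD : ¬ (p : ℤ) ∣ Cd * Dd) :
    ∀ r : ℤ, -1 ≤ r →
      (legendreSym p Δ = 1 →
        B (((p : ℤ) - 1) * d + r) ≡ B r [ZMOD p] ∧
        B (((p : ℤ) - 1) * d - 1) ≡ 0 [ZMOD p]) ∧
      (legendreSym p Δ = -1 →
        B ((p : ℤ) * d + r) ≡ Cd * B r - B ((d : ℤ) + r) [ZMOD p] ∧
        B ((p : ℤ) * d - 1) ≡ -B ((d : ℤ) - 1) [ZMOD p]) := by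
  intro r hr
  have hB : IsRecSolution a b B := hBrec
  have hBd : 0 < B (d - 1) :=
    hB.pos (fun ν hν => (ha ν hν).le) hb hBm1.ge (hB0 ▸ one_pos) _ (by omega)
  have hDd : Dd = -∏ i ∈ range d, -a (i + 1) := by
    obtain ⟨e, rfl⟩ : ∃ e, d = e + 1 := ⟨d - 1, by omega⟩
    rw [hD, prod_neg, card_range, pow_succ, Nat.add_sub_cancel]
    ring
  have hrec := hB.add_two_mul_eq hpa hpb hBm1 hB0 hBd.ne' hC
  simp only [← hDd] at hrec
  have hpD : ¬ (p : ℤ) ∣ Dd := fun h => hpCD (h.mul_left Cd)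
  subst hΔ
  obtain ⟨hr1, hr2⟩ := modEq_of_add_two_mul_eq hodd hrec hr
  obtain ⟨hm1, hm2⟩ := modEq_of_add_two_mul_eq hodd hrec le_rfl
  simp only [hBm1, ← sub_eq_add_neg, mul_zero, zero_sub] at hm1 hm2
  exact ⟨fun h => ⟨hr1 hpD h, hm1 hpD h⟩, fun h => ⟨hr2 h, hm2 h⟩⟩
end
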